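/- arXiv:2603.15962 — 4 statements merged into one kernel-verified Lean document; each statement's English description precedes it below -/
import Mathlib

section
/- For f, g ∈ L¹(ℝⁿ) and k ∈ ℤ, define B_k(f,g)(x) = ∫_{|y| < 2^{−k}} f(x−y) g(x+y) dy. Then ∫_{ℝⁿ} |B_k(f,g)(x)|^{1/2} dx ≲ 2^{−nk/2} ‖f‖_{L¹}^{1/2} ‖g‖_{L¹}^{1/2}, i.e. ‖B_k(f,g)‖_{L^{1/2}} ≲ 2^{−nk} ‖f‖_{L¹} ‖g‖_{L¹} with implicit constant depending only on n. -/
/-!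
Write `B(x) = ∫_{|y|<r} F(x-y) G(x+y) dy` with `F = |f|`, `G = |g|`, and weight it by the local
mass `M(x) = ∫_{|y|<3r} G(x+y) dy`. Cauchy–Schwarz gives `∫ B^{1/2} ≤ (∫ B/M)^{1/2} (∫ M)^{1/2}`,
and `∫ M = |B(0,3r)| ‖G‖₁ ≈ rⁿ ‖G‖₁`. Substituting `x = u + y`,
`∫ B/M = ∫ F(u) ∫_{|y|<r} G(u+2y) / M(u+y) dy du`. For `|y| < r` the mass `M(u+y)` dominates the
mass of `G` on `B(u,2r)`, which dominates `∫_{|y|<r} G(u+2y) dy`; so the inner integral is at most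
`1` and `∫ B/M ≤ ‖F‖₁`.
-/

open MeasureTheory Set ENNReal Metric

theorem lintegral_rpow_half_le_of_weight {α : Type*} [MeasurableSpace α] {μ : Measure α}
    {B W : α → ℝ≥0∞} (hB : AEMeasurable B μ) (hW : AEMeasurable W μ) (hW_top : ∀ x, W x ≠ ∞)
    (hB_zero : ∀ x, W x = 0 → B x = 0) :
    ∫⁻ x, B x ^ ((1 : ℝ) / 2) ∂μ ≤
      (∫⁻ x, B x / W x ∂μ) ^ ((1 : ℝ) / 2) * (∫⁻ x, W x ∂μ) ^ ((1 : ℝ) / 2) := by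
  have hsplit : ∀ x, B x ^ ((1 : ℝ) / 2) = (B x / W x) ^ ((1 : ℝ) / 2) * W x ^ ((1 : ℝ) / 2) := by
    intro x
    by_cases hW0 : W x = 0
    · simp [hB_zero x hW0]
    · rw [← ENNReal.mul_rpow_of_nonneg _ _ (by norm_num), ENNReal.div_mul_cancel hW0 (hW_top x)]
  have hsq : ∀ a : ℝ≥0∞, (a ^ ((1 : ℝ) / 2)) ^ (2 : ℝ) = a := fun a => by
    rw [← ENNReal.rpow_mul]; norm_num
  calc ∫⁻ x, B x ^ ((1 : ℝ) / 2) ∂μ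
      = ∫⁻ x, (B x / W x) ^ ((1 : ℝ) / 2) * W x ^ ((1 : ℝ) / 2) ∂μ := lintegral_congr hsplit
    _ ≤ (∫⁻ x, ((B x / W x) ^ ((1 : ℝ) / 2)) ^ (2 : ℝ) ∂μ) ^ (1 / (2 : ℝ)) *
          (∫⁻ x, (W x ^ ((1 : ℝ) / 2)) ^ (2 : ℝ) ∂μ) ^ (1 / (2 : ℝ)) :=
        ENNReal.lintegral_mul_le_Lp_mul_Lq μ Real.HolderConjugate.two_two
          ((hB.div hW).pow_const _) (hW.pow_const _)
    _ = _ := by simp only [hsq]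

noncomputable def localMass {E : Type*} [NormedAddCommGroup E] [MeasurableSpace E] (μ : Measure E)
    (R : ℝ) (G : E → ℝ≥0∞) (x : E) : ℝ≥0∞ :=
  ∫⁻ y in ball 0 R, G (x + y) ∂μ

noncomputable def localBilinear {E : Type*} [NormedAddCommGroup E] [MeasurableSpace E]
    (μ : Measure E) (r : ℝ) (F G : E → ℝ≥0∞) (x : E) : ℝ≥0∞ :=
  ∫⁻ y in ball 0 r, F (x - y) * G (x + y) ∂μ

section LocalBilinear

variable {E : Type*} [NormedAddCommGroup E] [MeasurableSpace E] {μ : Measure E} {r R : ℝ}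
  {F G : E → ℝ≥0∞}

theorem enorm_setIntegral_ball_mul_le (f g : E → ℝ) (x : E) :
    ‖∫ y in ball 0 r, f (x - y) * g (x + y) ∂μ‖ₑ ≤ localBilinear μ r (‖f ·‖ₑ) (‖g ·‖ₑ) x :=
  (enorm_integral_le_lintegral_enorm _).trans_eq (by simp only [enorm_mul]; rfl)

variable [BorelSpace E]

theorem setLIntegral_ball_zero_comp_add_left [μ.IsAddLeftInvariant] (φ : E → ℝ≥0∞) (a : E)
    (R : ℝ) : ∫⁻ y in ball 0 R, φ (a + y) ∂μ = ∫⁻ z in ball a R, φ z ∂μ := by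
  simpa [preimage_add_ball] using (measurePreserving_add_left μ a).setLIntegral_comp_preimage_emb
    (measurableEmbedding_addLeft a) φ (ball a R)

theorem localMass_eq_setLIntegral_ball [μ.IsAddLeftInvariant] (x : E) :
    localMass μ R G x = ∫⁻ z in ball x R, G z ∂μ :=
  setLIntegral_ball_zero_comp_add_left G x R

theorem localMass_le_lintegral [μ.IsAddLeftInvariant] (x : E) :
    localMass μ R G x ≤ ∫⁻ z, G z ∂μ :=
  (setLIntegral_le_lintegral _ _).trans_eq (lintegral_add_left_eq_self G x)

theorem localBilinear_eq_zero_of_localMass_eq_zero (hrR : r ≤ R) (hG : Measurable G) {x : E}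
    (h : localMass μ R G x = 0) : localBilinear μ r F G x = 0 := by
  have hG0 : ∀ᵐ y ∂μ.restrict (ball 0 r), G (x + y) = 0 :=
    ae_restrict_of_ae_restrict_of_subset (ball_subset_ball hrR)
      ((lintegral_eq_zero_iff (by fun_prop)).mp h)
  calc localBilinear μ r F G x = ∫⁻ _ in ball 0 r, 0 ∂μ :=
        lintegral_congr_ae (hG0.mono fun y hy => by simp [hy])
    _ = 0 := lintegral_zero

variable [SecondCountableTopology E] [SFinite μ]

theorem measurable_localMass (hG : Measurable G) : Measurable (localMass μ R G) :=
  Measurable.lintegral_prod_right' (f := fun p : E × E => G (p.1 + p.2)) (by fun_prop)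

theorem measurable_localBilinear (hF : Measurable F) (hG : Measurable G) :
    Measurable (localBilinear μ r F G) :=
  Measurable.lintegral_prod_right' (f := fun p : E × E => F (p.1 - p.2) * G (p.1 + p.2))
    (by fun_prop)

theorem lintegral_localMass [μ.IsAddRightInvariant] (hG : Measurable G) :
    ∫⁻ x, localMass μ R G x ∂μ = μ (ball 0 R) * ∫⁻ z, G z ∂μ := by
  simp only [localMass]
  rw [lintegral_lintegral_swap (by fun_prop)]
  simp_rw [lintegral_add_right_eq_self G, setLIntegral_const, mul_comm]

theorem localBilinear_congr_ae [μ.IsAddLeftInvariant] {F' G' : E → ℝ≥0∞} (hF : F =ᵐ[μ] F')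
    (hG : G =ᵐ[μ] G') : localBilinear μ r F G = localBilinear μ r F' G' := by
  funext x
  refine lintegral_congr_ae (ae_restrict_of_ae ?_)
  filter_upwards [(quasiMeasurePreserving_sub_left μ x).ae_eq_comp hF,
    (measurePreserving_add_left μ x).quasiMeasurePreserving.ae_eq_comp hG] with y hFy hGy
  simp only [Function.comp_apply] at hFy hGy
  rw [hFy, hGy]

end LocalBilinear

section AddHaar

variable {E : Type*} [NormedAddCommGroup E] [NormedSpace ℝ E] [MeasurableSpace E] [BorelSpace E]
  [FiniteDimensional ℝ E] {μ : Measure E} [μ.IsAddHaarMeasure] {r : ℝ} {F G : E → ℝ≥0∞}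

theorem setLIntegral_ball_comp_smul_le (φ : E → ℝ≥0∞) {c : ℝ} (hc : 1 ≤ c) (r : ℝ) :
    ∫⁻ y in ball 0 r, φ (c • y) ∂μ ≤ ∫⁻ z in ball 0 (c * r), φ z ∂μ := by
  have hc0 : c ≠ 0 := by positivity
  have hemb : MeasurableEmbedding (c • · : E → E) :=
    (MeasurableEquiv.smul₀ (α := E) c hc0).measurableEmbedding
  have hpre : (c • · : E → E) ⁻¹' ball 0 (c * r) = ball 0 r := by
    ext y
    have hc_pos : 0 < c := by positivity
    simp [norm_smul, abs_of_pos hc_pos, mul_lt_mul_iff_right₀ hc_pos]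
  calc ∫⁻ y in ball 0 r, φ (c • y) ∂μ
      = ∫⁻ z in ball 0 (c * r), φ z ∂(μ.map (c • ·)) := by
        rw [hemb.restrict_map, hemb.lintegral_map, hpre]
    _ ≤ ∫⁻ z in ball 0 (c * r), φ z ∂μ := by
        rw [Measure.map_addHaar_smul μ hc0, Measure.restrict_smul, lintegral_smul_measure]
        refine mul_le_of_le_one_left zero_le ?_
        rw [ENNReal.ofReal_le_one, abs_inv, abs_pow, abs_of_pos (by positivity : 0 < c)]
        exact inv_le_one_of_one_le₀ (one_le_pow₀ hc)

theorem setLIntegral_div_localMass_le_one (hG : Measurable G) (u : E) :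
    ∫⁻ y in ball 0 r, G (u + y + y) / localMass μ (3 * r) G (u + y) ∂μ ≤ 1 := by
  set Q := ∫⁻ z in ball u (2 * r), G z ∂μ
  have hQ_le : ∀ y ∈ ball (0 : E) r, Q ≤ localMass μ (3 * r) G (u + y) := by
    intro y hy
    rw [localMass_eq_setLIntegral_ball]
    refine lintegral_mono_set fun z hz => ?_
    rw [mem_ball_zero_iff] at hy
    rw [mem_ball] at hz ⊢
    calc dist z (u + y) ≤ dist z u + ‖y‖ := by
          simpa [dist_eq_norm, sub_add_eq_sub_sub] using norm_sub_le (z - u) y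
      _ < 3 * r := by linarith
  have hdouble : ∫⁻ y in ball 0 r, G (u + y + y) ∂μ ≤ Q := by
    calc ∫⁻ y in ball 0 r, G (u + y + y) ∂μ = ∫⁻ y in ball 0 r, G (u + (2 : ℝ) • y) ∂μ := by
          simp only [two_smul, add_assoc]
      _ ≤ ∫⁻ z in ball 0 (2 * r), G (u + z) ∂μ :=
          setLIntegral_ball_comp_smul_le (fun z => G (u + z)) one_le_two r
      _ = Q := setLIntegral_ball_zero_comp_add_left G u _
  calc ∫⁻ y in ball 0 r, G (u + y + y) / localMass μ (3 * r) G (u + y) ∂μ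
      ≤ ∫⁻ y in ball 0 r, G (u + y + y) / Q ∂μ := by
        refine setLIntegral_mono' measurableSet_ball fun y hy => ?_
        exact ENNReal.div_le_div_left (hQ_le y hy) _
    _ = (∫⁻ y in ball 0 r, G (u + y + y) ∂μ) / Q := by
        simp only [div_eq_mul_inv]
        exact lintegral_mul_const'' _ (by fun_prop)
    _ ≤ Q / Q := by gcongr
    _ ≤ 1 := ENNReal.div_self_le_one

theorem lintegral_localBilinear_div_localMass_le (hF : Measurable F) (hG : Measurable G) :
    ∫⁻ x, localBilinear μ r F G x / localMass μ (3 * r) G x ∂μ ≤ ∫⁻ u, F u ∂μ := by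
  set M := localMass μ (3 * r) G
  have hM : Measurable M := measurable_localMass hG
  calc ∫⁻ x, localBilinear μ r F G x / M x ∂μ
      = ∫⁻ x, ∫⁻ y in ball 0 r, F (x - y) * (G (x + y) / M x) ∂μ ∂μ := by
        refine lintegral_congr fun x => ?_
        simp only [localBilinear, div_eq_mul_inv, ← mul_assoc]
        exact (lintegral_mul_const'' _ (by fun_prop)).symm
    _ = ∫⁻ y in ball 0 r, ∫⁻ u, F u * (G (u + y + y) / M (u + y)) ∂μ ∂μ := by
        rw [lintegral_lintegral_swap (by fun_prop)]
        refine lintegral_congr fun y => ?_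
        rw [← lintegral_add_right_eq_self _ y]
        simp only [add_sub_cancel_right]
    _ = ∫⁻ u, F u * ∫⁻ y in ball 0 r, G (u + y + y) / M (u + y) ∂μ ∂μ := by
        rw [lintegral_lintegral_swap (by fun_prop)]
        exact lintegral_congr fun u => lintegral_const_mul _ (by fun_prop)
    _ ≤ ∫⁻ u, F u * 1 ∂μ := by
        gcongr with u
        exact setLIntegral_div_localMass_le_one hG u
    _ = ∫⁻ u, F u ∂μ := by simp only [mul_one]

theorem lintegral_localBilinear_rpow_half_le_of_measurable (hr : 0 ≤ r) (hF : Measurable F)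
    (hG : Measurable G) (hG_fin : ∫⁻ z, G z ∂μ ≠ ∞) :
    ∫⁻ x, localBilinear μ r F G x ^ ((1 : ℝ) / 2) ∂μ ≤
      (∫⁻ u, F u ∂μ) ^ ((1 : ℝ) / 2) * (μ (ball 0 (3 * r)) * ∫⁻ z, G z ∂μ) ^ ((1 : ℝ) / 2) := by
  calc ∫⁻ x, localBilinear μ r F G x ^ ((1 : ℝ) / 2) ∂μ
      ≤ (∫⁻ x, localBilinear μ r F G x / localMass μ (3 * r) G x ∂μ) ^ ((1 : ℝ) / 2) *
          (∫⁻ x, localMass μ (3 * r) G x ∂μ) ^ ((1 : ℝ) / 2) :=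
        lintegral_rpow_half_le_of_weight (measurable_localBilinear hF hG).aemeasurable
          (measurable_localMass hG).aemeasurable
          (fun x => ne_top_of_le_ne_top hG_fin (localMass_le_lintegral x))
          (fun x => localBilinear_eq_zero_of_localMass_eq_zero (by linarith) hG)
    _ ≤ _ := by
        rw [lintegral_localMass hG]
        exact mul_le_mul' (ENNReal.rpow_le_rpow (lintegral_localBilinear_div_localMass_le hF hG)
          (by norm_num)) le_rfl

theorem lintegral_localBilinear_rpow_half_le (hr : 0 ≤ r) (hF : AEMeasurable F μ)
    (hG : AEMeasurable G μ) (hG_fin : ∫⁻ z, G z ∂μ ≠ ∞) :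
    ∫⁻ x, localBilinear μ r F G x ^ ((1 : ℝ) / 2) ∂μ ≤
      (∫⁻ u, F u ∂μ) ^ ((1 : ℝ) / 2) * (μ (ball 0 (3 * r)) * ∫⁻ z, G z ∂μ) ^ ((1 : ℝ) / 2) := by
  rw [lintegral_congr_ae hG.ae_eq_mk] at hG_fin ⊢
  rw [localBilinear_congr_ae hF.ae_eq_mk hG.ae_eq_mk, lintegral_congr_ae hF.ae_eq_mk]
  exact lintegral_localBilinear_rpow_half_le_of_measurable hr hF.measurable_mk hG.measurable_mk
    hG_fin

theorem lintegral_rpow_half_abs_setIntegral_ball_mul_le (hr : 0 ≤ r) {f g : E → ℝ}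
    (hf : Integrable f μ) (hg : Integrable g μ) :
    ∫⁻ x, ENNReal.ofReal (|∫ y in ball 0 r, f (x - y) * g (x + y) ∂μ| ^ ((1 : ℝ) / 2)) ∂μ ≤
      ENNReal.ofReal
        ((μ.real (ball 0 (3 * r)) * (∫ y, |f y| ∂μ) * ∫ y, |g y| ∂μ) ^ ((1 : ℝ) / 2)) := by
  have hIf : 0 ≤ ∫ y, |f y| ∂μ := integral_nonneg fun _ => abs_nonneg _
  have hIg : 0 ≤ ∫ y, |g y| ∂μ := integral_nonneg fun _ => abs_nonneg _
  calc ∫⁻ x, ENNReal.ofReal (|∫ y in ball 0 r, f (x - y) * g (x + y) ∂μ| ^ ((1 : ℝ) / 2)) ∂μ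
      = ∫⁻ x, ‖∫ y in ball 0 r, f (x - y) * g (x + y) ∂μ‖ₑ ^ ((1 : ℝ) / 2) ∂μ := by
        simp only [Real.enorm_eq_ofReal_abs,
          ENNReal.ofReal_rpow_of_nonneg (abs_nonneg _) (by norm_num : (0 : ℝ) ≤ 1 / 2)]
    _ ≤ ∫⁻ x, localBilinear μ r (‖f ·‖ₑ) (‖g ·‖ₑ) x ^ ((1 : ℝ) / 2) ∂μ :=
        lintegral_mono fun x =>
          ENNReal.rpow_le_rpow (enorm_setIntegral_ball_mul_le f g x) (by norm_num)
    _ ≤ (∫⁻ y, ‖f y‖ₑ ∂μ) ^ ((1 : ℝ) / 2) *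
          (μ (ball 0 (3 * r)) * ∫⁻ y, ‖g y‖ₑ ∂μ) ^ ((1 : ℝ) / 2) :=
        lintegral_localBilinear_rpow_half_le hr hf.1.enorm hg.1.enorm hg.2.ne
    _ = _ := by
        simp only [← ofReal_integral_norm_eq_lintegral_enorm hf,
          ← ofReal_integral_norm_eq_lintegral_enorm hg, Real.norm_eq_abs,
          ← ofReal_measureReal (measure_ball_lt_top (μ := μ)).ne]
        rw [← ENNReal.ofReal_mul (by positivity), ENNReal.ofReal_rpow_of_nonneg hIf (by norm_num),
          ENNReal.ofReal_rpow_of_nonneg (by positivity) (by norm_num),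
          ← ENNReal.ofReal_mul (by positivity), ← Real.mul_rpow hIf (by positivity)]
        ring_nf

end AddHaar

theorem stmt_6_general (n : ℕ) :
    ∃ C : ℝ, 0 < C ∧ ∀ (k : ℤ) (f g : EuclideanSpace ℝ (Fin n) → ℝ),
      Integrable f volume → Integrable g volume →
      ∫⁻ x, ENNReal.ofReal
          (|∫ y in Metric.ball (0 : EuclideanSpace ℝ (Fin n)) ((2 : ℝ) ^ (-k)),
              f (x - y) * g (x + y)| ^ ((1 : ℝ) / 2))
        ≤ ENNReal.ofReal (C * ((2 : ℝ) ^ (-k) : ℝ) ^ ((n : ℝ) / 2) *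
            (∫ y, |f y|) ^ ((1 : ℝ) / 2) * (∫ y, |g y|) ^ ((1 : ℝ) / 2)) := by
  set V := volume.real (ball (0 : EuclideanSpace ℝ (Fin n)) 1)
  have hV : 0 < V := ENNReal.toReal_pos (measure_ball_pos volume _ one_pos).ne' (by finiteness)
  refine ⟨(3 ^ n * V) ^ ((1 : ℝ) / 2), by positivity, fun k f g hf hg => ?_⟩
  have hr : 0 < (2 : ℝ) ^ (-k) := by positivity
  have hball : volume.real (ball (0 : EuclideanSpace ℝ (Fin n)) (3 * 2 ^ (-k))) =
      3 ^ n * V * ((2 : ℝ) ^ (-k)) ^ n := by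
    rw [measureReal_def, Measure.addHaar_ball_of_pos volume 0 (by positivity),
      finrank_euclideanSpace_fin, ENNReal.toReal_mul, ENNReal.toReal_ofReal (by positivity),
      ← measureReal_def]
    ring
  have hpow : (((2 : ℝ) ^ (-k)) ^ n) ^ ((1 : ℝ) / 2) = ((2 : ℝ) ^ (-k)) ^ ((n : ℝ) / 2) := by
    rw [← Real.rpow_natCast, ← Real.rpow_mul hr.le, mul_one_div]
  refine (lintegral_rpow_half_abs_setIntegral_ball_mul_le hr.le hf hg).trans_eq ?_
  rw [hball]
  congr 1
  rw [Real.mul_rpow (by positivity) (integral_nonneg fun _ => abs_nonneg _),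
    Real.mul_rpow (by positivity) (integral_nonneg fun _ => abs_nonneg _),
    Real.mul_rpow (by positivity) (by positivity), hpow]

theorem stmt_6 (n : ℕ) (hn : 0 < n) :
    ∃ C : ℝ, 0 < C ∧ ∀ (k : ℤ) (f g : EuclideanSpace ℝ (Fin n) → ℝ),
      Integrable f volume → Integrable g volume →
      ∫⁻ x, ENNReal.ofReal
          (|∫ y in Metric.ball (0 : EuclideanSpace ℝ (Fin n)) ((2 : ℝ) ^ (-k)),
              f (x - y) * g (x + y)| ^ ((1 : ℝ) / 2))
        ≤ ENNReal.ofReal (C * ((2 : ℝ) ^ (-k) : ℝ) ^ ((n : ℝ) / 2) *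
            (∫ y, |f y|) ^ ((1 : ℝ) / 2) * (∫ y, |g y|) ^ ((1 : ℝ) / 2)) :=
  stmt_6_general n
end

section
/- Let 0 < s < n with s/n < 1. For p, q ∈ (1, ∞) with 1/p + 1/q = s/n, choose β, γ > 0 with βp > 1, γq > 1, β + γ ≤ 1, and define f(y) = |y|^{−n/p} (log(e/|y|))^{−β} 𝟙_{0<|y|<1}(y) and g(y) = |y|^{−n/q} (log(e/|y|))^{−γ} 𝟙_{0<|y|<1}(y). Then f ∈ L^p(ℝⁿ), g ∈ L^q(ℝⁿ), but ∫_{|y|<1} |y|^{−n} (log(e/|y|))^{−(β+γ)} dy = ∞; consequently if G_s(y) ≥ c|y|^{s−n} on |y| < 1, then J_s(f,g)(0) = ∞. -/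
/-!
In polar coordinates `∫_{‖y‖<1} ‖y‖^{-n} log(e/‖y‖)^{-a} dy` is a multiple of
`∫_0^1 r⁻¹ log(e/r)^{-a} dr`, which the substitution `r = exp (1 - u)` turns into
`∫_1^∞ u^{-a} du`, finite iff `1 < a`. Now `|f|^p` and `|g|^q` have this form with `a = βp` and
`a = γq`, while `1/p + 1/q = s/n` puts `‖y‖^{s-n} f(-y) g(y)` in this form with `a = β + γ ≤ 1`,
so the lower bound `G y ≥ c ‖y‖^{s-n}` makes `∫ G(y) f(-y) g(y) dy` diverge.
-/

open MeasureTheory Set ENNReal Metric Module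

lemma log_exp_one_div_pos {r : ℝ} (h0 : 0 < r) (h1 : r < 1) :
    0 < Real.log (Real.exp 1 / r) := by
  rw [Real.log_div (Real.exp_ne_zero 1) h0.ne', Real.log_exp]
  linarith [Real.log_neg h0 h1]

lemma integrableOn_Ioo_inv_mul_log_rpow_iff (a : ℝ) :
    IntegrableOn (fun r : ℝ => r⁻¹ * Real.log (Real.exp 1 / r) ^ (-a)) (Ioo 0 1) ↔ 1 < a := by
  set φ : ℝ → ℝ := fun u => Real.exp (1 - u)
  have himg : φ '' Ioi 1 = Ioo 0 1 := by
    rw [show φ = Real.exp ∘ (fun u => 1 - u) from rfl, image_comp, image_const_sub_Ioi,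
      sub_self, Real.image_exp_Iio, Real.exp_zero]
  have hder : ∀ u ∈ Ioi (1 : ℝ), HasDerivWithinAt φ (-φ u) (Ioi 1) u := fun u _ => by
    simpa using (((hasDerivAt_id u).const_sub 1).exp).hasDerivWithinAt
  have hinj : InjOn φ (Ioi 1) := fun u _ v _ h => by
    simpa using Real.exp_eq_exp.mp h
  rw [← himg, integrableOn_image_iff_integrableOn_abs_deriv_smul measurableSet_Ioi hder hinj,
    ← neg_lt_neg_iff, ← integrableOn_Ioi_rpow_iff one_pos]
  refine integrableOn_congr_fun (fun u _ => ?_) measurableSet_Ioi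
  have hφ : 0 < φ u := Real.exp_pos _
  have hlog : Real.exp 1 / φ u = Real.exp u := by
    rw [← Real.exp_sub]; ring_nf
  simp only [smul_eq_mul, abs_neg, abs_of_pos hφ, hlog, Real.log_exp]
  rw [← mul_assoc, mul_inv_cancel₀ hφ.ne', one_mul]

section Radial

variable {E : Type*} [NormedAddCommGroup E] [NormedSpace ℝ E] [FiniteDimensional ℝ E]
  [MeasurableSpace E] [BorelSpace E] [Nontrivial E] (μ : Measure E) [μ.IsAddHaarMeasure]
  {d : ℕ}

theorem integrableOn_ball_norm_rpow_neg_mul_log_rpow_iff (hd : finrank ℝ E = d) (a : ℝ) :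
    IntegrableOn (fun x : E => ‖x‖ ^ (-(d : ℝ)) * Real.log (Real.exp 1 / ‖x‖) ^ (-a))
      (ball 0 1) μ ↔ 1 < a := by
  rw [integrableOn_fun_norm_addHaar μ
      (f := fun r => r ^ (-(d : ℝ)) * Real.log (Real.exp 1 / r) ^ (-a)), hd,
    ← integrableOn_Ioo_inv_mul_log_rpow_iff]
  refine integrableOn_congr_fun (fun r hr => ?_) measurableSet_Ioo
  have hd0 : 0 < d := hd ▸ finrank_pos
  rw [smul_eq_mul, ← mul_assoc, ← Real.rpow_natCast, ← Real.rpow_add hr.1, Nat.cast_pred hd0,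
    show (d : ℝ) - 1 + -d = -1 by ring, Real.rpow_neg_one]

theorem setLIntegral_norm_rpow_neg_mul_log_rpow_eq_top (hd : finrank ℝ E = d) {a : ℝ}
    (ha : a ≤ 1) :
    ∫⁻ x in {x : E | 0 < ‖x‖ ∧ ‖x‖ < 1},
      ENNReal.ofReal (‖x‖ ^ (-(d : ℝ)) * Real.log (Real.exp 1 / ‖x‖) ^ (-a)) ∂μ = ⊤ := by
  set S := {x : E | 0 < ‖x‖ ∧ ‖x‖ < 1}
  have hS : S =ᵐ[μ] ball 0 1 := by
    rw [show S = ball 0 1 \ {0} by ext; simp [S, and_comm]]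
    exact sdiff_null_ae_eq_self (measure_singleton 0)
  have hnonneg : ∀ᵐ x ∂μ.restrict S,
      0 ≤ ‖x‖ ^ (-(d : ℝ)) * Real.log (Real.exp 1 / ‖x‖) ^ (-a) := by
    filter_upwards [ae_restrict_mem (by measurability : MeasurableSet S)] with x hx
    have := log_exp_one_div_pos hx.1 hx.2
    positivity
  by_contra h
  have hint := (lintegral_ofReal_ne_top_iff_integrable (by fun_prop) hnonneg).1 h
  exact ha.not_gt ((integrableOn_ball_norm_rpow_neg_mul_log_rpow_iff μ hd a).1
    ((integrableOn_congr_set_ae hS).1 hint))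

theorem memLp_norm_rpow_mul_log_rpow (hd : finrank ℝ E = d) {p b : ℝ} (hp : 0 < p)
    (hbp : 1 < b * p) :
    MemLp (fun y : E => if 0 < ‖y‖ ∧ ‖y‖ < 1 then
      ‖y‖ ^ (-(d : ℝ) / p) * Real.log (Real.exp 1 / ‖y‖) ^ (-b) else 0) (ENNReal.ofReal p) μ := by
  set f : E → ℝ := fun y => if 0 < ‖y‖ ∧ ‖y‖ < 1 then
    ‖y‖ ^ (-(d : ℝ) / p) * Real.log (Real.exp 1 / ‖y‖) ^ (-b) else 0
  have hd0 : d ≠ 0 := (hd ▸ finrank_pos).ne'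
  have hfp : (fun y => ‖f y‖ ^ p) = (ball (0 : E) 1).indicator
      (fun y => ‖y‖ ^ (-(d : ℝ)) * Real.log (Real.exp 1 / ‖y‖) ^ (-(b * p))) := by
    funext y
    rcases eq_or_ne y 0 with rfl | hy0
    -- at `y = 0` the right side vanishes through the convention `0 ^ x = 0` for `x ≠ 0`
    · simp [f, Real.zero_rpow hp.ne', hd0]
    by_cases hy1 : ‖y‖ < 1
    · have hr : 0 < ‖y‖ := norm_pos_iff.2 hy0
      have hL := log_exp_one_div_pos hr hy1
      rw [indicator_of_mem (mem_ball_zero_iff.2 hy1)]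
      simp only [f, if_pos (And.intro hr hy1)]
      rw [Real.norm_of_nonneg (by positivity), Real.mul_rpow (by positivity) (by positivity),
        ← Real.rpow_mul hr.le, ← Real.rpow_mul hL.le, div_mul_cancel₀ _ hp.ne', neg_mul]
    · rw [indicator_of_notMem (by simpa using hy1)]
      simp [f, hy1, Real.zero_rpow hp.ne']
  have hmeas : Measurable f := Measurable.ite (by measurability) (by fun_prop) measurable_const
  rw [← integrable_norm_rpow_iff hmeas.aestronglyMeasurable (by simpa using hp) ofReal_ne_top,
    ENNReal.toReal_ofReal hp.le, hfp, integrable_indicator_iff measurableSet_ball,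
    integrableOn_ball_norm_rpow_neg_mul_log_rpow_iff μ hd]
  exact hbp

end Radial

theorem lintegral_ofReal_eq_top_of_const_mul_le {α : Type*} [MeasurableSpace α] {μ : Measure α}
    {S : Set α} {u v : α → ℝ} {c : ℝ} (hc : 0 < c) (hS : MeasurableSet S)
    (hu : ∫⁻ x in S, ENNReal.ofReal (u x) ∂μ = ⊤) (huv : ∀ x ∈ S, c * u x ≤ v x) :
    ∫⁻ x, ENNReal.ofReal (v x) ∂μ = ⊤ := by
  refine eq_top_iff.2 ?_
  calc ⊤ = ENNReal.ofReal c * ∫⁻ x in S, ENNReal.ofReal (u x) ∂μ := by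
        rw [hu, ENNReal.mul_top (ENNReal.ofReal_pos.2 hc).ne']
    _ = ∫⁻ x in S, ENNReal.ofReal (c * u x) ∂μ := by
        rw [← lintegral_const_mul' _ _ ofReal_ne_top]
        exact setLIntegral_congr_fun hS fun x _ => (ENNReal.ofReal_mul hc.le).symm
    _ ≤ ∫⁻ x in S, ENNReal.ofReal (v x) ∂μ :=
        setLIntegral_mono' hS fun x hx => ENNReal.ofReal_le_ofReal (huv x hx)
    _ ≤ ∫⁻ x, ENNReal.ofReal (v x) ∂μ := setLIntegral_le_lintegral _ _

theorem rpow_sub_mul_rpow_mul_rpow {r L s d e₁ e₂ β γ : ℝ} (hr : 0 < r) (hL : 0 < L)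
    (he : e₁ + e₂ = -s) :
    r ^ (s - d) * (r ^ e₁ * L ^ (-β) * (r ^ e₂ * L ^ (-γ))) = r ^ (-d) * L ^ (-(β + γ)) := by
  rw [show r ^ (s - d) * (r ^ e₁ * L ^ (-β) * (r ^ e₂ * L ^ (-γ))) =
      r ^ (s - d) * r ^ e₁ * r ^ e₂ * (L ^ (-β) * L ^ (-γ)) by ring,
    ← Real.rpow_add hr, ← Real.rpow_add hr, ← Real.rpow_add hL]
  congr 2 <;> linarith

theorem stmt_11_general (n : ℕ) (hn : 0 < n) (s : ℝ)
    (p q β γ : ℝ) (hp : 1 < p) (hq : 1 < q) (hpq : 1 / p + 1 / q = s / n)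
    (hβp : 1 < β * p) (hγq : 1 < γ * q) (hβγ : β + γ ≤ 1)
    (f g : EuclideanSpace ℝ (Fin n) → ℝ)
    (hfdef : f = fun y => if 0 < ‖y‖ ∧ ‖y‖ < 1 then
        ‖y‖ ^ (-(n : ℝ) / p) * Real.log (Real.exp 1 / ‖y‖) ^ (-β) else 0)
    (hgdef : g = fun y => if 0 < ‖y‖ ∧ ‖y‖ < 1 then
        ‖y‖ ^ (-(n : ℝ) / q) * Real.log (Real.exp 1 / ‖y‖) ^ (-γ) else 0)
    (G : EuclideanSpace ℝ (Fin n) → ℝ)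
    (c : ℝ) (hc : 0 < c)
    (hGlow : ∀ y : EuclideanSpace ℝ (Fin n), 0 < ‖y‖ → ‖y‖ < 1 →
      c * ‖y‖ ^ (s - (n : ℝ)) ≤ G y) :
    MemLp f (ENNReal.ofReal p) volume ∧ MemLp g (ENNReal.ofReal q) volume ∧
    (∫⁻ y in {y : EuclideanSpace ℝ (Fin n) | 0 < ‖y‖ ∧ ‖y‖ < 1},
        ENNReal.ofReal (‖y‖ ^ (-(n : ℝ)) * Real.log (Real.exp 1 / ‖y‖) ^ (-(β + γ)))) = ⊤ ∧
    (∫⁻ y, ENNReal.ofReal (G y * f (-y) * g y)) = ⊤ := by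
  have : Nonempty (Fin n) := ⟨⟨0, hn⟩⟩
  have hd : finrank ℝ (EuclideanSpace ℝ (Fin n)) = n := finrank_euclideanSpace_fin
  have hdiv := setLIntegral_norm_rpow_neg_mul_log_rpow_eq_top volume hd hβγ
  refine ⟨hfdef ▸ memLp_norm_rpow_mul_log_rpow volume hd (by linarith) hβp,
    hgdef ▸ memLp_norm_rpow_mul_log_rpow volume hd (by linarith) hγq, hdiv, ?_⟩
  have hexp : -(n : ℝ) / p + -(n : ℝ) / q = -s := by
    have hn0 : (n : ℝ) ≠ 0 := by exact_mod_cast hn.ne'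
    field_simp at hpq ⊢
    linarith
  refine lintegral_ofReal_eq_top_of_const_mul_le hc (by measurability) hdiv fun y ⟨hy0, hy1⟩ => ?_
  have hL := log_exp_one_div_pos hy0 hy1
  simp only [hfdef, hgdef, norm_neg, if_pos (And.intro hy0 hy1)]
  rw [← rpow_sub_mul_rpow_mul_rpow hy0 hL hexp, ← mul_assoc, mul_assoc (G y)]
  exact mul_le_mul_of_nonneg_right (hGlow y hy0 hy1) (by positivity)

theorem stmt_11 (n : ℕ) (hn : 0 < n) (s : ℝ) (hs0 : 0 < s) (hsn : s < n)
    (p q β γ : ℝ) (hp : 1 < p) (hq : 1 < q) (hpq : 1 / p + 1 / q = s / n)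
    (hβ : 0 < β) (hγ : 0 < γ) (hβp : 1 < β * p) (hγq : 1 < γ * q) (hβγ : β + γ ≤ 1)
    (f g : EuclideanSpace ℝ (Fin n) → ℝ)
    (hfdef : f = fun y => if 0 < ‖y‖ ∧ ‖y‖ < 1 then
        ‖y‖ ^ (-(n : ℝ) / p) * Real.log (Real.exp 1 / ‖y‖) ^ (-β) else 0)
    (hgdef : g = fun y => if 0 < ‖y‖ ∧ ‖y‖ < 1 then
        ‖y‖ ^ (-(n : ℝ) / q) * Real.log (Real.exp 1 / ‖y‖) ^ (-γ) else 0)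
    (G : EuclideanSpace ℝ (Fin n) → ℝ) (hGnn : ∀ y, 0 ≤ G y)
    (c : ℝ) (hc : 0 < c)
    (hGlow : ∀ y : EuclideanSpace ℝ (Fin n), 0 < ‖y‖ → ‖y‖ < 1 →
      c * ‖y‖ ^ (s - (n : ℝ)) ≤ G y) :
    MemLp f (ENNReal.ofReal p) volume ∧ MemLp g (ENNReal.ofReal q) volume ∧
    (∫⁻ y in {y : EuclideanSpace ℝ (Fin n) | 0 < ‖y‖ ∧ ‖y‖ < 1},
        ENNReal.ofReal (‖y‖ ^ (-(n : ℝ)) * Real.log (Real.exp 1 / ‖y‖) ^ (-(β + γ)))) = ⊤ ∧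
    (∫⁻ y, ENNReal.ofReal (G y * f (-y) * g y)) = ⊤ :=
  stmt_11_general n hn s p q β γ hp hq hpq hβp hγq hβγ f g hfdef hgdef G c hc hGlow
end

section
/- Let 0 < s < n, 1 < p, q < ∞ with 1/p + 1/q > s/n, and 1/r = 1/p + 1/q − s/n. Suppose G_s(y) ≥ c|y|^{s−n} for |y| ≤ 1. For any α with 1/α > 1/p + 1/q, choose β < p, γ < q with 1/β + 1/γ = 1/α, and set f(y) = |y|^{−n/p}(log(e/|y|))^{−1/β}𝟙_{0<|y|<1}, g(y) = |y|^{−n/q}(log(e/|y|))^{−1/γ}𝟙_{0<|y|<1}. Then for all x with 0 < |x| < 1/8, J_s(f,g)(x) ≥ c' |x|^{−n/r} (log(e/|x|))^{−1/α}. -/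
/-!
On the ball `|y| < |x|/2` both `|x - y|` and `|x + y|` lie in `[|x|/2, 3|x|/2]`, where the
profiles `t ^ a (log (e/t)) ^ (-b)` (`a ≤ 0 ≤ b`) of `f` and `g` are at least
`(3|x|/2) ^ a ((1 + log 2) log (e/|x|)) ^ (-b)`, while `G y ≥ c (|x|/2) ^ (s - n)`.
Integrating the product of these three lower bounds over that ball, of volume `≍ |x| ^ n`,
gives `|x| ^ (s - n/p - n/q) = |x| ^ (-n/r)` and
`(log (e/|x|)) ^ (-1/β - 1/γ) = (log (e/|x|)) ^ (-1/α)`.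
-/

open MeasureTheory Set Real

lemma ofReal_mul_measure_le_lintegral {X : Type*} [MeasurableSpace X] {μ : Measure X}
    [MeasurableSingletonClass X] [NullSingletonClass μ] {S : Set X} (hS : MeasurableSet S)
    {a : X} {m : ℝ} {F : X → ℝ} (hF : ∀ y ∈ S, y ≠ a → m ≤ F y) :
    ENNReal.ofReal m * μ S ≤ ∫⁻ y, ENNReal.ofReal (F y) ∂μ :=
  calc ENNReal.ofReal m * μ S = ENNReal.ofReal m * μ (S \ {a}) := by
        rw [measure_sdiff_null (measure_singleton a)]
    _ = ∫⁻ _ in S \ {a}, ENNReal.ofReal m ∂μ := (setLIntegral_const _ _).symm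
    _ ≤ ∫⁻ y in S \ {a}, ENNReal.ofReal (F y) ∂μ :=
        setLIntegral_mono' (hS.diff (measurableSet_singleton a))
          fun y ⟨hyS, hya⟩ => ENNReal.ofReal_le_ofReal (hF y hyS hya)
    _ ≤ ∫⁻ y, ENNReal.ofReal (F y) ∂μ := setLIntegral_le_lintegral _ _

lemma ofReal_mul_volume_ball_le_lintegral {E : Type*} [NormedAddCommGroup E] [NormedSpace ℝ E]
    [MeasurableSpace E] [BorelSpace E] [FiniteDimensional ℝ E] [Nontrivial E] (μ : Measure E)
    [μ.IsAddHaarMeasure] {ρ m : ℝ} (hρ : 0 ≤ ρ) {F : E → ℝ}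
    (hF : ∀ y ∈ Metric.ball 0 ρ, y ≠ 0 → m ≤ F y) :
    ENNReal.ofReal (m * ρ ^ Module.finrank ℝ E * (μ (Metric.ball 0 1)).toReal)
      ≤ ∫⁻ y, ENNReal.ofReal (F y) ∂μ := by
  rw [ENNReal.ofReal_mul' ENNReal.toReal_nonneg, ENNReal.ofReal_toReal measure_ball_lt_top.ne,
    ENNReal.ofReal_mul' (by positivity), mul_assoc, ← Measure.addHaar_ball μ 0 hρ]
  exact ofReal_mul_measure_le_lintegral Metric.isOpen_ball.measurableSet hF

lemma norm_add_mem_Icc_of_norm_le_half {E : Type*} [SeminormedAddCommGroup E] {x y : E}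
    (hy : ‖y‖ ≤ ‖x‖ / 2) : ‖x + y‖ ∈ Icc (‖x‖ / 2) (3 * ‖x‖ / 2) := by
  have hlow := norm_le_norm_add_norm_sub' x (-y)
  have hupp := norm_add_le x y
  rw [sub_neg_eq_add, norm_neg] at hlow
  constructor <;> linarith

lemma log_exp_div_pos {z : ℝ} (hz0 : 0 < z) (hz : z < exp 1) : 0 < log (exp 1 / z) :=
  log_pos ((one_lt_div hz0).mpr hz)

lemma log_exp_div_le_of_half_le {t z : ℝ} (ht0 : 0 < t) (ht1 : t ≤ 1) (hz : t / 2 ≤ z) :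
    log (exp 1 / z) ≤ (1 + log 2) * log (exp 1 / t) := by
  have hz0 : 0 < z := by linarith
  have hlogt : log t ≤ 0 := log_nonpos ht0.le ht1
  have hlogz : log t - log 2 ≤ log z := by
    rw [← log_div ht0.ne' two_ne_zero]; exact log_le_log (by positivity) hz
  have hlog2 : 0 < log 2 := log_pos one_lt_two
  rw [log_div (exp_ne_zero 1) hz0.ne', log_div (exp_ne_zero 1) ht0.ne', log_exp]
  nlinarith

noncomputable def powLog (a b z : ℝ) : ℝ := z ^ a * log (exp 1 / z) ^ (-b)

noncomputable def truncPowLog {E : Type*} [Norm E] (a b : ℝ) (y : E) : ℝ :=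
  if 0 < ‖y‖ ∧ ‖y‖ < 1 then powLog a b ‖y‖ else 0

noncomputable def powLogBound (a b t : ℝ) : ℝ :=
  (3 * t / 2) ^ a * ((1 + log 2) * log (exp 1 / t)) ^ (-b)

lemma powLogBound_le_powLog {a b t z : ℝ} (ha : a ≤ 0) (hb : 0 ≤ b) (ht0 : 0 < t) (ht1 : t ≤ 1)
    (hz : z ∈ Icc (t / 2) (3 * t / 2)) : powLogBound a b t ≤ powLog a b z := by
  have hz0 : 0 < z := by linarith [hz.1]
  have hlogz : 0 < log (exp 1 / z) :=
    log_exp_div_pos hz0 (by linarith [hz.2, exp_one_gt_d9])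
  have hlogt : 0 < log (exp 1 / t) := log_exp_div_pos ht0 (by linarith [exp_one_gt_d9])
  have hκ : 0 < 1 + log 2 := by linarith [log_pos one_lt_two]
  exact mul_le_mul (rpow_le_rpow_of_nonpos hz0 hz.2 ha)
    (rpow_le_rpow_of_nonpos hlogz (log_exp_div_le_of_half_le ht0 ht1 hz.1) (neg_nonpos.mpr hb))
    (by positivity) (by positivity)

lemma powLogBound_nonneg (a b : ℝ) {t : ℝ} (ht0 : 0 < t) (ht1 : t ≤ 1) :
    0 ≤ powLogBound a b t := by
  have hlogt : 0 < log (exp 1 / t) := log_exp_div_pos ht0 (by linarith [exp_one_gt_d9])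
  have hκ : 0 < 1 + log 2 := by linarith [log_pos one_lt_two]
  unfold powLogBound; positivity

lemma powLogBound_le_truncPowLog {E : Type*} [Norm E] {a b t : ℝ} {w : E} (ha : a ≤ 0)
    (hb : 0 ≤ b) (ht0 : 0 < t) (ht : t < 2 / 3) (hw : ‖w‖ ∈ Icc (t / 2) (3 * t / 2)) :
    powLogBound a b t ≤ truncPowLog a b w := by
  rw [truncPowLog, if_pos ⟨by linarith [hw.1], by linarith [hw.2]⟩]
  exact powLogBound_le_powLog ha hb ht0 (by linarith) hw

lemma mul_powLogBound_le_mul_truncPowLog {E : Type*} [SeminormedAddCommGroup E] {G : E → ℝ}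
    {c k a a' b b' : ℝ} (hc : 0 ≤ c) (hk : k ≤ 0) (ha : a ≤ 0) (ha' : a' ≤ 0) (hb : 0 ≤ b)
    (hb' : 0 ≤ b') (hG : ∀ y : E, 0 < ‖y‖ → ‖y‖ ≤ 1 → c * ‖y‖ ^ k ≤ G y) {x y : E}
    (hx : ‖x‖ < 2 / 3) (hy0 : 0 < ‖y‖) (hy : ‖y‖ < ‖x‖ / 2) :
    c * (‖x‖ / 2) ^ k * powLogBound a b ‖x‖ * powLogBound a' b' ‖x‖
      ≤ G y * truncPowLog a b (x - y) * truncPowLog a' b' (x + y) := by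
  have hx0 : 0 < ‖x‖ := by linarith
  have hGy : c * (‖x‖ / 2) ^ k ≤ G y :=
    (mul_le_mul_of_nonneg_left (rpow_le_rpow_of_nonpos hy0 hy.le hk) hc).trans
      (hG y hy0 (by linarith))
  have hf : powLogBound a b ‖x‖ ≤ truncPowLog a b (x - y) := by
    rw [sub_eq_add_neg]
    exact powLogBound_le_truncPowLog ha hb hx0 hx
      (norm_add_mem_Icc_of_norm_le_half (by rw [norm_neg]; linarith))
  have hg : powLogBound a' b' ‖x‖ ≤ truncPowLog a' b' (x + y) :=
    powLogBound_le_truncPowLog ha' hb' hx0 hx (norm_add_mem_Icc_of_norm_le_half (by linarith))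
  have hG0 : 0 ≤ G y := (by positivity : 0 ≤ c * (‖x‖ / 2) ^ k).trans hGy
  have hbf := powLogBound_nonneg a b hx0 (by linarith)
  have hbg := powLogBound_nonneg a' b' hx0 (by linarith)
  exact mul_le_mul (mul_le_mul hGy hf hbf hG0) hg hbg (mul_nonneg hG0 (hbf.trans hf))

lemma mul_powLogBound_mul_powLogBound (s a a' b b' : ℝ) (n : ℕ) {t : ℝ} (ht0 : 0 < t)
    (hL : 0 < log (exp 1 / t)) :
    (t / 2) ^ (s - n) * powLogBound a b t * powLogBound a' b' t * (t / 2) ^ n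
      = (1 / 2) ^ s * (3 / 2) ^ (a + a') * (1 + log 2) ^ (-(b + b'))
        * t ^ (s + a + a') * log (exp 1 / t) ^ (-(b + b')) := by
  have hκ : (0 : ℝ) < 1 + log 2 := by linarith [log_pos one_lt_two]
  have hn : (t / 2) ^ n ≠ 0 := by positivity
  unfold powLogBound
  rw [rpow_sub_natCast (by positivity), div_eq_mul_one_div t, mul_rpow ht0.le (by norm_num),
    mul_div_right_comm 3 t, mul_rpow (by norm_num) ht0.le, mul_rpow (by norm_num) ht0.le,
    mul_rpow hκ.le hL.le, mul_rpow hκ.le hL.le, neg_add, rpow_add ht0, rpow_add ht0, rpow_add hL,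
    rpow_add hκ, rpow_add (by norm_num : (0 : ℝ) < 3 / 2)]
  field_simp

theorem stmt_14_general (n : ℕ) (s : ℝ) (hsn : s < n)
    (p q r α β γ : ℝ) (hp : 1 < p) (hq : 1 < q)
    (hr : 1 / r = 1 / p + 1 / q - s / n)
    (hβ0 : 0 < β) (hγ0 : 0 < γ)
    (hβγ : 1 / β + 1 / γ = 1 / α)
    (f g : EuclideanSpace ℝ (Fin n) → ℝ)
    (hfdef : f = fun y => if 0 < ‖y‖ ∧ ‖y‖ < 1 then
        ‖y‖ ^ (-(n : ℝ) / p) * Real.log (Real.exp 1 / ‖y‖) ^ (-(1 / β)) else 0)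
    (hgdef : g = fun y => if 0 < ‖y‖ ∧ ‖y‖ < 1 then
        ‖y‖ ^ (-(n : ℝ) / q) * Real.log (Real.exp 1 / ‖y‖) ^ (-(1 / γ)) else 0)
    (G : EuclideanSpace ℝ (Fin n) → ℝ)
    (c : ℝ) (hc : 0 < c)
    (hGlow : ∀ y : EuclideanSpace ℝ (Fin n), 0 < ‖y‖ → ‖y‖ ≤ 1 →
      c * ‖y‖ ^ (s - (n : ℝ)) ≤ G y) :
    ∃ c' : ℝ, 0 < c' ∧ ∀ x : EuclideanSpace ℝ (Fin n), 0 < ‖x‖ → ‖x‖ < 1 / 8 →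
      ENNReal.ofReal
          (c' * ‖x‖ ^ (-(n : ℝ) / r) * Real.log (Real.exp 1 / ‖x‖) ^ (-(1 / α)))
        ≤ ∫⁻ y, ENNReal.ofReal (G y * f (x - y) * g (x + y)) := by
  set B₁ := Metric.ball (0 : EuclideanSpace ℝ (Fin n)) 1
  have hB₁ : 0 < (volume B₁).toReal :=
    ENNReal.toReal_pos (Metric.measure_ball_pos _ _ one_pos).ne' measure_ball_lt_top.ne
  obtain ⟨C, hC⟩ : ∃ C : ℝ, C = c * (1 / 2) ^ s * (3 / 2) ^ (-(n : ℝ) / p + -(n : ℝ) / q)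
      * (1 + log 2) ^ (-(1 / α)) * (volume B₁).toReal := ⟨_, rfl⟩
  refine ⟨C, by rw [hC]; positivity, ?_⟩
  intro x hx0 hx8
  have : Nontrivial (EuclideanSpace ℝ (Fin n)) := ⟨⟨x, 0, norm_pos_iff.mp hx0⟩⟩
  have hn : (n : ℝ) ≠ 0 := by
    simpa using (Module.finrank_pos (R := ℝ) (M := EuclideanSpace ℝ (Fin n))).ne'
  set t := ‖x‖
  set m := c * (t / 2) ^ (s - n) * powLogBound (-(n : ℝ) / p) (1 / β) t
    * powLogBound (-(n : ℝ) / q) (1 / γ) t with hm_def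
  have hexp : -(n : ℝ) / r = s + -(n : ℝ) / p + -(n : ℝ) / q := by
    rw [div_eq_mul_one_div _ r, hr]; field_simp; ring
  have hm : m * (t / 2) ^ n * (volume B₁).toReal
      = C * t ^ (-(n : ℝ) / r) * log (exp 1 / t) ^ (-(1 / α)) := by
    rw [hC, hm_def, hexp, ← hβγ]
    linear_combination (c * (volume B₁).toReal) * mul_powLogBound_mul_powLogBound s
      (-(n : ℝ) / p) (-(n : ℝ) / q) (1 / β) (1 / γ) n hx0
      (log_exp_div_pos hx0 (by linarith [exp_one_gt_d9]))
  have hbound : ∀ y ∈ Metric.ball 0 (t / 2), y ≠ 0 → m ≤ G y * f (x - y) * g (x + y) :=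
    fun y hy hy_ne => by
      rw [hfdef, hgdef]
      exact mul_powLogBound_le_mul_truncPowLog hc.le (by linarith)
        (div_nonpos_of_nonpos_of_nonneg (by simp) (by linarith))
        (div_nonpos_of_nonpos_of_nonneg (by simp) (by linarith)) (by positivity) (by positivity)
        hGlow (by linarith) (norm_pos_iff.mpr hy_ne) (mem_ball_zero_iff.mp hy)
  rw [← hm]
  simpa only [finrank_euclideanSpace_fin] using
    ofReal_mul_volume_ball_le_lintegral volume (by positivity) hbound

theorem stmt_14 (n : ℕ) (hn : 0 < n) (s : ℝ) (hs0 : 0 < s) (hsn : s < n)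
    (p q r α β γ : ℝ) (hp : 1 < p) (hq : 1 < q)
    (hpq : s / n < 1 / p + 1 / q) (hr : 1 / r = 1 / p + 1 / q - s / n)
    (hα0 : 0 < α) (hα : 1 / p + 1 / q < 1 / α)
    (hβ0 : 0 < β) (hβ : β < p) (hγ0 : 0 < γ) (hγ : γ < q)
    (hβγ : 1 / β + 1 / γ = 1 / α)
    (f g : EuclideanSpace ℝ (Fin n) → ℝ)
    (hfdef : f = fun y => if 0 < ‖y‖ ∧ ‖y‖ < 1 then
        ‖y‖ ^ (-(n : ℝ) / p) * Real.log (Real.exp 1 / ‖y‖) ^ (-(1 / β)) else 0)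
    (hgdef : g = fun y => if 0 < ‖y‖ ∧ ‖y‖ < 1 then
        ‖y‖ ^ (-(n : ℝ) / q) * Real.log (Real.exp 1 / ‖y‖) ^ (-(1 / γ)) else 0)
    (G : EuclideanSpace ℝ (Fin n) → ℝ) (hGnn : ∀ y, 0 ≤ G y)
    (c : ℝ) (hc : 0 < c)
    (hGlow : ∀ y : EuclideanSpace ℝ (Fin n), 0 < ‖y‖ → ‖y‖ ≤ 1 →
      c * ‖y‖ ^ (s - (n : ℝ)) ≤ G y) :
    ∃ c' : ℝ, 0 < c' ∧ ∀ x : EuclideanSpace ℝ (Fin n), 0 < ‖x‖ → ‖x‖ < 1 / 8 →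
      ENNReal.ofReal
          (c' * ‖x‖ ^ (-(n : ℝ) / r) * Real.log (Real.exp 1 / ‖x‖) ^ (-(1 / α)))
        ≤ ∫⁻ y, ENNReal.ofReal (G y * f (x - y) * g (x + y)) :=
  stmt_14_general n s hsn p q r α β γ hp hq hr hβ0 hγ0 hβγ f g hfdef hgdef G c hc hGlow
end

section
/- Let 0 < s < n and suppose G_s ≥ 0 satisfies G_s(y) ≥ c|y|^{s−n} for |y| ≤ 1. Then there is no 0 < α < ∞ and constant C such that ‖J_s(f,g)‖_{L^{n/(n−s),α}} ≤ C ‖f‖_{L¹} ‖g‖_{L^∞} for all f ∈ L¹(ℝⁿ), g ∈ L^∞(ℝⁿ). In other words, J_s : L¹ × L^∞ → L^{n/(n−s),α} is unbounded for every finite α. -/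
open MeasureTheory Set ENNReal

/-- Decreasing rearrangement of `h` with respect to `μ`. -/
noncomputable def rearrangement {X : Type*} [MeasurableSpace X] (μ : Measure X)
    (h : X → ℝ) (t : ℝ≥0∞) : ℝ≥0∞ :=
  sInf {l : ℝ≥0∞ | μ {x | l < ENNReal.ofReal |h x|} ≤ t}

/-- Lorentz quasi-norm `‖h‖_{L^{p,α}}` defined via the decreasing rearrangement. -/
noncomputable def lorentzNorm {X : Type*} [MeasurableSpace X] (μ : Measure X)
    (h : X → ℝ) (p : ℝ) (α : ℝ≥0∞) : ℝ≥0∞ :=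
  if α = ⊤ then
    ⨆ t ∈ Ioi (0 : ℝ), ENNReal.ofReal t ^ (1 / p) * rearrangement μ h (ENNReal.ofReal t)
  else
    (∫⁻ t in Ioi (0 : ℝ),
        (ENNReal.ofReal t ^ (1 / p) * rearrangement μ h (ENNReal.ofReal t)) ^ α.toReal *
          ENNReal.ofReal t⁻¹) ^ (1 / α.toReal)

/-!
Take `g ≡ 1` and `f = 𝟙_{B(0,ε)} / |B(0,ε)|`, so that `‖f‖₁ = ‖g‖_∞ = 1` and `J_s(f, 1)(x)` is the
mean of `G_s` over `B(x, ε)`, hence at least `c (2|x|)^{s-n}` for `2ε < |x| ≤ 1/2`. A function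
bounded below by `a |x|^β` on an annulus `ρ < |x| ≤ R` has `t^{-β/n} h^*(t)` bounded below by a
constant independent of `ρ` for `ω ρ^n < t < ω R^n / 2` (`ω` the volume of the unit ball), so its
`L^{-n/β, α}` quasi-norm is at least a constant times `log (R^n / (2ρ^n)) ^ (1/α)`, which is
unbounded as `ρ = 2ε → 0`.
-/

open Metric Module

section Lorentz

variable {X : Type*} [MeasurableSpace X] {μ : Measure X} {h : X → ℝ}

theorem le_rearrangement_of_lt_measure {S : Set X} {t a : ℝ≥0∞} (hS : t < μ S)
    (ha : ∀ x ∈ S, a ≤ ENNReal.ofReal |h x|) : a ≤ rearrangement μ h t := by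
  refine le_sInf fun l hl => le_of_not_gt fun hla => ?_
  have hsub : S ⊆ {x | l < ENNReal.ofReal |h x|} := fun x hx => hla.trans_le (ha x hx)
  exact ((hS.trans_le (measure_mono hsub)).trans_le hl).false

theorem lintegral_ofReal_inv_Ioo {A B : ℝ} (hA : 0 < A) (hAB : A ≤ B) :
    ∫⁻ t in Ioo A B, ENNReal.ofReal t⁻¹ = ENNReal.ofReal (Real.log (B / A)) := by
  have hint : IntegrableOn (fun t : ℝ => t⁻¹) (Ioo A B) :=
    ((continuousOn_inv₀.mono fun t ht => (hA.trans_le ht.1).ne').integrableOn_compact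
      isCompact_Icc).mono_set Ioo_subset_Icc_self
  rw [← ofReal_integral_eq_lintegral_ofReal hint
      (ae_restrict_of_forall_mem measurableSet_Ioo fun t ht => inv_nonneg.2 (hA.trans ht.1).le),
    ← integral_Ioc_eq_integral_Ioo, ← intervalIntegral.integral_of_le hAB,
    integral_inv_of_pos hA (hA.trans_le hAB)]

theorem ofReal_mul_log_rpow_le_lorentzNorm {p α K A B : ℝ} (hα : 0 < α) (hK : 0 ≤ K)
    (hA : 0 < A) (hAB : A ≤ B)
    (hKh : ∀ t ∈ Ioo A B,
      ENNReal.ofReal K ≤ ENNReal.ofReal t ^ (1 / p) * rearrangement μ h (ENNReal.ofReal t)) :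
    ENNReal.ofReal (K * Real.log (B / A) ^ (1 / α)) ≤ lorentzNorm μ h p (ENNReal.ofReal α) := by
  have hlog : 0 ≤ Real.log (B / A) := Real.log_nonneg ((one_le_div hA).2 hAB)
  rw [lorentzNorm, if_neg ofReal_ne_top, toReal_ofReal hα.le]
  calc ENNReal.ofReal (K * Real.log (B / A) ^ (1 / α))
      = (ENNReal.ofReal K ^ α * ∫⁻ t in Ioo A B, ENNReal.ofReal t⁻¹) ^ (1 / α) := by
        rw [lintegral_ofReal_inv_Ioo hA hAB, ENNReal.mul_rpow_of_nonneg _ _ (by positivity),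
          ← ENNReal.rpow_mul, mul_one_div_cancel hα.ne', ENNReal.rpow_one, ENNReal.ofReal_mul hK,
          ENNReal.ofReal_rpow_of_nonneg hlog (by positivity)]
    _ ≤ _ := by
        gcongr
        rw [← lintegral_const_mul' _ _ (ENNReal.rpow_ne_top_of_nonneg hα.le ofReal_ne_top)]
        refine (setLIntegral_mono' measurableSet_Ioo fun t ht => ?_).trans
          (lintegral_mono_set (Ioo_subset_Ioi_self.trans (Ioi_subset_Ioi hA.le)))
        gcongr
        exact hKh t ht

end Lorentz

theorem measureReal_ball_pos {X : Type*} [PseudoMetricSpace X] [ProperSpace X] [MeasurableSpace X]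
    (μ : Measure X) [IsFiniteMeasureOnCompacts μ] [μ.IsOpenPosMeasure] (x : X) {r : ℝ}
    (hr : 0 < r) : 0 < μ.real (ball x r) :=
  ENNReal.toReal_pos (measure_ball_pos μ x hr).ne' measure_ball_lt_top.ne

noncomputable def normalizedBallIndicator {E : Type*} [NormedAddCommGroup E] [MeasurableSpace E]
    (μ : Measure E) (ε : ℝ) : E → ℝ :=
  (ball (0 : E) ε).indicator fun _ => (μ.real (ball 0 ε))⁻¹

theorem integral_mul_normalizedBallIndicator_sub {E : Type*} [NormedAddCommGroup E]
    [MeasurableSpace E] [OpensMeasurableSpace E] (μ : Measure E) (G : E → ℝ) (x : E) (ε : ℝ) :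
    ∫ y, G y * normalizedBallIndicator μ ε (x - y) ∂μ =
      (μ.real (ball 0 ε))⁻¹ * ∫ y in ball x ε, G y ∂μ := by
  have hind : (fun y => G y * normalizedBallIndicator μ ε (x - y)) =
      (ball x ε).indicator fun y => G y * (μ.real (ball 0 ε))⁻¹ := by
    ext y
    classical
    simp only [normalizedBallIndicator, Set.indicator_apply, mem_ball_iff_norm', zero_sub, norm_neg]
    split_ifs <;> simp
  rw [hind, integral_indicator measurableSet_ball, integral_mul_const, mul_comm]

section HaarMeasure

variable {E : Type*} [NormedAddCommGroup E] [NormedSpace ℝ E] [MeasurableSpace E] [BorelSpace E]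
  [FiniteDimensional ℝ E] (μ : Measure E) [μ.IsAddHaarMeasure]

theorem le_rearrangement_of_rpow_le [Nontrivial E] {h : E → ℝ} {a β ρ R t : ℝ} (ha : 0 ≤ a)
    (hβ : β ≤ 0) (hρ : 0 ≤ ρ) (hR : 0 ≤ R) (hh : ∀ x : E, ρ < ‖x‖ → ‖x‖ ≤ R → a * ‖x‖ ^ β ≤ h x)
    (ht : t ∈ Ioo (μ.real (ball 0 1) * ρ ^ finrank ℝ E) (μ.real (ball 0 1) * R ^ finrank ℝ E / 2)) :
    ENNReal.ofReal (a * (2 * t / μ.real (ball 0 1)) ^ (β / finrank ℝ E)) ≤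
      rearrangement μ h (ENNReal.ofReal t) := by
  set ω := μ.real (ball (0 : E) 1)
  set d := finrank ℝ E
  have hω : 0 < ω := measureReal_ball_pos μ 0 one_pos
  have hd₀ : 0 < d := finrank_pos
  have hd : (d : ℝ) ≠ 0 := Nat.cast_ne_zero.2 hd₀.ne'
  have ht₀ : 0 < t := (by positivity : 0 ≤ ω * ρ ^ d).trans_lt ht.1
  -- `ω r ^ d = 2 t`, so the annulus `ρ < ‖x‖ ≤ r` has measure `2 t - ω ρ ^ d > t`
  set r := (2 * t / ω) ^ (1 / (d : ℝ))
  have hr₀ : 0 ≤ r := by positivity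
  have hrd : ω * r ^ d = 2 * t := by
    rw [← Real.rpow_natCast, ← Real.rpow_mul (by positivity), one_div_mul_cancel hd,
      Real.rpow_one]
    field_simp
  have hρr : ρ < r :=
    lt_of_pow_lt_pow_left₀ d hr₀ (lt_of_mul_lt_mul_left (by linarith [ht.1]) hω.le)
  have hrR : r ≤ R := le_of_pow_le_pow_left₀ hd₀.ne' hR
    (le_of_mul_le_mul_left (by linarith [ht.2]) hω)
  have hrβ : (2 * t / ω) ^ (β / d) = r ^ β := by
    rw [← Real.rpow_mul (by positivity), one_div_mul_eq_div]
  refine le_rearrangement_of_lt_measure (S := closedBall 0 r \ closedBall 0 ρ) ?_ fun x hx => ?_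
  · rw [← ofReal_measureReal ((measure_mono sdiff_subset).trans_lt measure_closedBall_lt_top).ne,
      measureReal_sdiff (closedBall_subset_closedBall hρr.le) measurableSet_closedBall
        measure_closedBall_lt_top.ne,
      Measure.addHaar_real_closedBall μ _ hr₀, Measure.addHaar_real_closedBall μ _ hρ,
      ENNReal.ofReal_lt_ofReal_iff_of_nonneg ht₀.le]
    linarith [ht.1]
  · obtain ⟨hxr, hxρ⟩ := hx
    rw [mem_closedBall_zero_iff] at hxr
    rw [mem_closedBall_zero_iff, not_le] at hxρ
    rw [hrβ]
    refine ENNReal.ofReal_le_ofReal ?_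
    calc a * r ^ β ≤ a * ‖x‖ ^ β :=
          mul_le_mul_of_nonneg_left (Real.rpow_le_rpow_of_nonpos (hρ.trans_lt hxρ) hxr hβ) ha
      _ ≤ h x := hh x hxρ (hxr.trans hrR)
      _ ≤ |h x| := le_abs_self _

theorem ofReal_le_lorentzNorm_of_rpow_le [Nontrivial E] {h : E → ℝ} {a α β ρ R : ℝ} (hα : 0 < α)
    (ha : 0 ≤ a) (hβ : β ≤ 0) (hρ : 0 < ρ) (hR : 0 ≤ R)
    (hρR : 2 * ρ ^ finrank ℝ E ≤ R ^ finrank ℝ E)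
    (hh : ∀ x : E, ρ < ‖x‖ → ‖x‖ ≤ R → a * ‖x‖ ^ β ≤ h x) :
    ENNReal.ofReal (a * (2 / μ.real (ball 0 1)) ^ (β / finrank ℝ E) *
        Real.log (R ^ finrank ℝ E / (2 * ρ ^ finrank ℝ E)) ^ (1 / α)) ≤
      lorentzNorm μ h (-finrank ℝ E / β) (ENNReal.ofReal α) := by
  set ω := μ.real (ball (0 : E) 1)
  set d := finrank ℝ E
  have hω : 0 < ω := measureReal_ball_pos μ 0 one_pos
  have hAB : ω * ρ ^ d ≤ ω * R ^ d / 2 := by nlinarith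
  have hBA : ω * R ^ d / 2 / (ω * ρ ^ d) = R ^ d / (2 * ρ ^ d) := by
    field_simp
  rw [← hBA]
  refine ofReal_mul_log_rpow_le_lorentzNorm hα (by positivity) (by positivity) hAB fun t ht => ?_
  have ht₀ : 0 < t := (by positivity : 0 < ω * ρ ^ d).trans ht.1
  calc ENNReal.ofReal (a * (2 / ω) ^ (β / d))
      = ENNReal.ofReal t ^ (1 / (-d / β)) * ENNReal.ofReal (a * (2 * t / ω) ^ (β / d)) := by
        rw [ENNReal.ofReal_rpow_of_pos ht₀, ← ENNReal.ofReal_mul (by positivity), one_div_div,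
          div_neg, Real.rpow_neg ht₀.le, show 2 * t / ω = 2 / ω * t by ring,
          Real.mul_rpow (by positivity) ht₀.le]
        field_simp
    _ ≤ _ := by
        gcongr
        exact le_rearrangement_of_rpow_le μ ha hβ hρ.le hR hh ht

theorem integrable_normalizedBallIndicator (ε : ℝ) :
    Integrable (normalizedBallIndicator μ ε) μ :=
  (integrableOn_const measure_ball_lt_top.ne).integrable_indicator measurableSet_ball

theorem eLpNorm_one_normalizedBallIndicator {ε : ℝ} (hε : 0 < ε) :
    eLpNorm (normalizedBallIndicator μ ε) 1 μ = 1 := by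
  rw [normalizedBallIndicator, eLpNorm_indicator_const measurableSet_ball one_ne_zero one_ne_top,
    Real.enorm_of_nonneg (by positivity), ENNReal.toReal_one, div_one, ENNReal.rpow_one,
    ENNReal.ofReal_inv_of_pos (measureReal_ball_pos μ 0 hε), ofReal_measureReal]
  exact ENNReal.inv_mul_cancel (measure_ball_pos μ 0 hε).ne' measure_ball_lt_top.ne

theorem le_integral_mul_normalizedBallIndicator_sub {G : E → ℝ} {x : E} {ε a : ℝ} (hε : 0 < ε)
    (hG : IntegrableOn G (ball x ε) μ) (ha : ∀ y ∈ ball x ε, a ≤ G y) :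
    a ≤ ∫ y, G y * normalizedBallIndicator μ ε (x - y) ∂μ := by
  rw [integral_mul_normalizedBallIndicator_sub, le_inv_mul_iff₀ (measureReal_ball_pos μ 0 hε),
    ← Measure.addHaar_real_ball_center μ x, mul_comm]
  exact setIntegral_ge_of_const_le_real measurableSet_ball measure_ball_lt_top.ne ha hG

theorem rpow_le_integral_mul_normalizedBallIndicator_sub {G : E → ℝ} (hG : LocallyIntegrable G μ)
    {c β ε : ℝ} (hc : 0 ≤ c) (hβ : β ≤ 0)
    (hGlow : ∀ y : E, 0 < ‖y‖ → ‖y‖ ≤ 1 → c * ‖y‖ ^ β ≤ G y) {x : E} (hε : 0 < ε)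
    (hx₁ : 2 * ε < ‖x‖) (hx₂ : ‖x‖ ≤ 1 / 2) :
    c * 2 ^ β * ‖x‖ ^ β ≤ ∫ y, G y * normalizedBallIndicator μ ε (x - y) ∂μ := by
  refine le_integral_mul_normalizedBallIndicator_sub μ hε
    ((hG.integrableOn_isCompact (isCompact_closedBall x ε)).mono_set ball_subset_closedBall)
    fun y hy => ?_
  have hxy : ‖x - y‖ < ε := mem_ball_iff_norm'.1 hy
  have hy₀ : 0 < ‖y‖ := by linarith [norm_sub_norm_le x y]
  have hyx : ‖y‖ ≤ 2 * ‖x‖ := by linarith [norm_le_norm_add_norm_sub' y x, norm_sub_rev x y]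
  calc c * 2 ^ β * ‖x‖ ^ β = c * (2 * ‖x‖) ^ β := by
        rw [Real.mul_rpow zero_le_two (norm_nonneg x), mul_assoc]
    _ ≤ c * ‖y‖ ^ β := mul_le_mul_of_nonneg_left (Real.rpow_le_rpow_of_nonpos hy₀ hyx hβ) hc
    _ ≤ G y := hGlow y hy₀ (by linarith)

theorem ofReal_le_lorentzNorm_integral_mul_normalizedBallIndicator_sub [Nontrivial E] {G : E → ℝ}
    (hG : LocallyIntegrable G μ) {c α β ρ : ℝ} (hc : 0 ≤ c) (hα : 0 < α) (hβ : β ≤ 0)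
    (hGlow : ∀ y : E, 0 < ‖y‖ → ‖y‖ ≤ 1 → c * ‖y‖ ^ β ≤ G y) (hρ : 0 < ρ)
    (hρR : 2 * ρ ^ finrank ℝ E ≤ (1 / 2) ^ finrank ℝ E) :
    ENNReal.ofReal (c * 2 ^ β * (2 / μ.real (ball 0 1)) ^ (β / finrank ℝ E) *
        Real.log ((1 / 2) ^ finrank ℝ E / (2 * ρ ^ finrank ℝ E)) ^ (1 / α)) ≤
      lorentzNorm μ (fun x => ∫ y, G y * normalizedBallIndicator μ (ρ / 2) (x - y) ∂μ)
        (-finrank ℝ E / β) (ENNReal.ofReal α) :=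
  ofReal_le_lorentzNorm_of_rpow_le μ hα (by positivity) hβ hρ (by norm_num) hρR
    fun _ hx₁ hx₂ => rpow_le_integral_mul_normalizedBallIndicator_sub μ hG hc hβ hGlow
      (half_pos hρ) (by linarith) hx₂

end HaarMeasure

theorem exists_pos_lt_log_div_pow {R : ℝ} (hR : 0 < R) {d : ℕ} (hd : 0 < d) (L : ℝ) :
    ∃ ρ > 0, L < Real.log (R ^ d / (2 * ρ ^ d)) := by
  refine ⟨R * Real.exp (-(|L| + 1)), by positivity, ?_⟩
  have hratio : R ^ d / (2 * (R * Real.exp (-(|L| + 1))) ^ d) = Real.exp (d * (|L| + 1)) / 2 := by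
    rw [mul_pow, ← Real.exp_nat_mul, mul_neg, Real.exp_neg]
    field_simp
  have hd₁ : (1 : ℝ) ≤ d := by exact_mod_cast hd
  rw [hratio, Real.log_div (Real.exp_ne_zero _) two_ne_zero, Real.log_exp]
  nlinarith [le_abs_self L, abs_nonneg L, Real.log_two_lt_d9]

theorem stmt_17_general (n : ℕ) (hn : 0 < n) (s : ℝ) (hsn : s < n)
    (G : EuclideanSpace ℝ (Fin n) → ℝ) (hGint : Integrable G volume)
    (c : ℝ) (hc : 0 < c)
    (hGlow : ∀ y : EuclideanSpace ℝ (Fin n), 0 < ‖y‖ → ‖y‖ ≤ 1 →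
      c * ‖y‖ ^ (s - (n : ℝ)) ≤ G y) :
    ¬ ∃ (α C : ℝ), 0 < α ∧ 0 < C ∧
      ∀ f g : EuclideanSpace ℝ (Fin n) → ℝ,
        Integrable f volume → MemLp g ⊤ volume →
        lorentzNorm volume (fun x => ∫ y, G y * f (x - y) * g (x + y))
            ((n : ℝ) / ((n : ℝ) - s)) (ENNReal.ofReal α)
          ≤ ENNReal.ofReal C * eLpNorm f 1 volume * eLpNorm g ⊤ volume := by
  rintro ⟨α, C, hα, hC, hbound⟩
  have : Nonempty (Fin n) := Fin.pos_iff_nonempty.mp hn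
  set ω := volume.real (ball (0 : EuclideanSpace ℝ (Fin n)) 1)
  have hω : 0 < ω := measureReal_ball_pos volume 0 one_pos
  set K := c * 2 ^ (s - n) * (2 / ω) ^ ((s - n) / n)
  have hK : 0 < K := by positivity
  obtain ⟨ρ, hρ, hlog⟩ := exists_pos_lt_log_div_pow (R := 1 / 2) (by norm_num) hn ((C / K) ^ α)
  have hlog₀ : 0 < Real.log ((1 / 2) ^ n / (2 * ρ ^ n)) :=
    (by positivity : 0 ≤ (C / K) ^ α).trans_lt hlog
  have hρR : 2 * ρ ^ n ≤ (1 / 2) ^ n :=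
    ((one_lt_div (by positivity)).1 ((Real.log_pos_iff (by positivity)).1 hlog₀)).le
  have hlower := ofReal_le_lorentzNorm_integral_mul_normalizedBallIndicator_sub volume
    hGint.locallyIntegrable hc.le hα (by linarith) hGlow hρ (by rwa [finrank_euclideanSpace_fin])
  rw [finrank_euclideanSpace_fin,
    show -(n : ℝ) / (s - n) = n / (n - s) by rw [← neg_sub, neg_div_neg_eq]] at hlower
  have hupper := hbound _ (fun _ => 1) (integrable_normalizedBallIndicator volume (ρ / 2))
    (memLp_top_const 1)
  simp only [mul_one] at hupper
  rw [eLpNorm_one_normalizedBallIndicator volume (half_pos hρ), eLpNorm_exponent_top,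
    eLpNormEssSup_const _ (NeZero.ne _), enorm_one, mul_one, mul_one] at hupper
  have hKC := (ENNReal.ofReal_le_ofReal_iff hC.le).1 (hlower.trans hupper)
  have hCK : C / K < Real.log ((1 / 2) ^ n / (2 * ρ ^ n)) ^ (1 / α) := by
    rw [one_div α]
    exact (Real.lt_rpow_inv_iff_of_pos (by positivity) hlog₀.le hα).2 hlog
  rw [div_lt_iff₀ hK] at hCK
  linarith

theorem stmt_17 (n : ℕ) (hn : 0 < n) (s : ℝ) (hs0 : 0 < s) (hsn : s < n)
    (G : EuclideanSpace ℝ (Fin n) → ℝ) (hGmeas : Measurable G) (hGnn : ∀ y, 0 ≤ G y)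
    (hGint : Integrable G volume)
    (c : ℝ) (hc : 0 < c)
    (hGlow : ∀ y : EuclideanSpace ℝ (Fin n), 0 < ‖y‖ → ‖y‖ ≤ 1 →
      c * ‖y‖ ^ (s - (n : ℝ)) ≤ G y) :
    ¬ ∃ (α C : ℝ), 0 < α ∧ 0 < C ∧
      ∀ f g : EuclideanSpace ℝ (Fin n) → ℝ,
        Integrable f volume → MemLp g ⊤ volume →
        lorentzNorm volume (fun x => ∫ y, G y * f (x - y) * g (x + y))
            ((n : ℝ) / ((n : ℝ) - s)) (ENNReal.ofReal α)
          ≤ ENNReal.ofReal C * eLpNorm f 1 volume * eLpNorm g ⊤ volume :=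
  stmt_17_general n hn s hsn G hGint c hc hGlow
end
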